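/- arXiv:2012.02652 — 3 statements merged into one kernel-verified Lean document; each statement's English description precedes it below -/
import Mathlib

section
/- Suppose the ad request set is partitioned into finitely many sub-markets R^h, each with constant value-per-conversion v^h > 0, and for each h the sub-market mechanism satisfies cpa_h(γ) = v^h/(1+γ) with γ ↦ ((1+γ−I)/(1+γ))·cv_h(γ) non-increasing and cv_h(γ) > 0. Then the combined episode-level mechanism is IC and IR: the aggregate delivered ROI under report γ equals γ exactly, and the total utility Σ_h (v^h − I·cpa_h(γ))·cv_h(γ) = ((1+γ−I)/(1+γ))·Σ_h v^h·cv_h(γ) is non-increasing in γ. -/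
/-!
With the per-sub-market price `cpa_h(γ) = v^h / (1 + γ)`, every sub-market returns exactly
`γ` per unit of spend, and its utility is `v^h` times the sub-market's own non-increasing
quantity `((1 + γ - I) / (1 + γ)) · cv_h(γ)`. Both properties are linear in the sub-market,
so they survive summation: the aggregate ROI is again `γ`, and the total utility is a
nonnegative combination of non-increasing functions.
-/

open Finset

section Submarket

variable {K : Type*} [Field K]

lemma sub_div_one_add_mul (v c γ : K) (hγ : 1 + γ ≠ 0) :
    (v - v / (1 + γ)) * c = γ * (v / (1 + γ) * c) := by
  field_simp
  ring

lemma sub_mul_div_one_add_mul (I v c γ : K) (hγ : 1 + γ ≠ 0) :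
    (v - I * (v / (1 + γ))) * c = v * ((1 + γ - I) / (1 + γ) * c) := by
  field_simp

end Submarket

lemma Finset.sum_div_sum_eq_of_forall_eq_mul {ι K : Type*} [Field K] (s : Finset ι)
    {f g : ι → K} {r : K} (hfg : ∀ i ∈ s, f i = r * g i) (hg : ∑ i ∈ s, g i ≠ 0) :
    (∑ i ∈ s, f i) / ∑ i ∈ s, g i = r := by
  rw [sum_congr rfl hfg, ← mul_sum, mul_div_cancel_right₀ _ hg]

lemma Finset.antitoneOn_sum_mul {ι α β : Type*} [Preorder α] [Semiring β] [PartialOrder β]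
    [IsOrderedRing β] (s : Finset ι) {S : Set α} {w : ι → β} {f : ι → α → β}
    (hw : ∀ i ∈ s, 0 ≤ w i) (hf : ∀ i ∈ s, AntitoneOn (f i) S) :
    AntitoneOn (fun x => ∑ i ∈ s, w i * f i x) S :=
  fun _ ha _ hb hab => sum_le_sum fun i hi =>
    mul_le_mul_of_nonneg_left (hf i hi ha hb hab) (hw i hi)

/-- Composition across sub-markets: if in every sub-market h the mechanism satisfies
cpa_h(γ) = v^h/(1+γ) with ((1+γ−I)/(1+γ))·cv_h(γ) non-increasing and cv_h > 0, then at
the episode level the aggregate delivered ROI under report γ equals γ, the total utility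
equals ((1+γ−I)/(1+γ))·Σ_h v^h·cv_h(γ), and is non-increasing in γ. -/
theorem submarket_composition_ic_ir
    {H : Type*} [Fintype H] [Nonempty H]
    (I : ℝ) (hI : I = 0 ∨ I = 1)
    (Γ : Set ℝ) (hΓ : Γ = Set.Ioi (-1 + I))
    (v : H → ℝ) (hv : ∀ h, 0 < v h)
    (cpa cv : H → ℝ → ℝ)
    (hcpa : ∀ h, ∀ γ ∈ Γ, cpa h γ = v h / (1 + γ))
    (hcv : ∀ h, ∀ γ ∈ Γ, 0 < cv h γ)
    (hmono : ∀ h, AntitoneOn (fun γ => ((1 + γ - I) / (1 + γ)) * cv h γ) Γ) :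
    (∀ γ ∈ Γ,
      (∑ h, (v h - cpa h γ) * cv h γ) / (∑ h, cpa h γ * cv h γ) = γ ∧
      (∑ h, (v h - I * cpa h γ) * cv h γ) =
        ((1 + γ - I) / (1 + γ)) * ∑ h, v h * cv h γ) ∧
    AntitoneOn (fun γ => ∑ h, (v h - I * cpa h γ) * cv h γ) Γ := by
  have hpos : ∀ γ ∈ Γ, 0 < 1 + γ := by
    intro γ hγ
    rw [hΓ, Set.mem_Ioi] at hγ
    rcases hI with rfl | rfl <;> linarith
  have hutility : ∀ γ ∈ Γ, ∀ h,
      (v h - I * cpa h γ) * cv h γ = v h * ((1 + γ - I) / (1 + γ) * cv h γ) := by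
    intro γ hγ h
    rw [hcpa h γ hγ, sub_mul_div_one_add_mul _ _ _ _ (hpos γ hγ).ne']
  refine ⟨fun γ hγ => ⟨?_, ?_⟩, ?_⟩
  · refine sum_div_sum_eq_of_forall_eq_mul _ (fun h _ => ?_)
      (sum_pos (fun h _ => ?_) univ_nonempty).ne'
    · rw [hcpa h γ hγ, sub_div_one_add_mul _ _ _ (hpos γ hγ).ne']
    · rw [hcpa h γ hγ]
      exact mul_pos (div_pos (hv h) (hpos γ hγ)) (hcv h γ hγ)
  · rw [sum_congr rfl fun h _ => hutility γ hγ h, mul_sum]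
    exact sum_congr rfl fun h _ => by ring
  · exact (antitoneOn_sum_mul univ (fun h _ => (hv h).le) (fun h _ => hmono h)).congr
      fun γ hγ => sum_congr rfl fun h _ => (hutility γ hγ h).symm
end

section
/- If the aggregate delivered ROI under report γ equals exactly (Σ_h (v^h − cpa_h(γ))·cv_h(γ))/(Σ_h cpa_h(γ)·cv_h(γ)) = γ in each sub-market simultaneously (i.e., cpa_h(γ) = v^h/(1+γ) for each h), then for any true type γ₀, the set of feasible reports is exactly {γ' : γ' ≥ γ₀}, and under a non-increasing truthful-utility function, reporting γ₀ is weakly optimal among all feasible reports. -/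
/-!
When `cpa_h(γ) = v^h / (1 + γ)`, each sub-market's return `(v^h - cpa_h(γ)) cv_h(γ)` is exactly
`γ · cpa_h(γ) cv_h(γ)`, so the aggregate delivered ROI is `γ` itself. Feasibility of `γ'` for type
`γ₀` thus reads `γ₀ ≤ γ'`, and truthfulness is optimal because `W` is non-increasing.
-/

theorem sum_sub_div_one_add_mul_eq {ι : Type*} (s : Finset ι) (v c : ι → ℝ) {γ : ℝ}
    (hγ : 1 + γ ≠ 0) :
    ∑ i ∈ s, (v i - v i / (1 + γ)) * c i = γ * ∑ i ∈ s, v i / (1 + γ) * c i := by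
  rw [Finset.mul_sum]
  refine Finset.sum_congr rfl fun i _ => ?_
  field_simp
  ring

theorem aggregate_roi_eq_of_cpa_eq_div {ι : Type*} (s : Finset ι) (hs : s.Nonempty)
    (v cpa c : ι → ℝ) (hv : ∀ i ∈ s, 0 < v i) (hc : ∀ i ∈ s, 0 < c i) {γ : ℝ}
    (hγ : 0 < 1 + γ) (hcpa : ∀ i ∈ s, cpa i = v i / (1 + γ)) :
    (∑ i ∈ s, (v i - cpa i) * c i) / ∑ i ∈ s, cpa i * c i = γ := by
  have hden_pos : 0 < ∑ i ∈ s, v i / (1 + γ) * c i :=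
    Finset.sum_pos (fun i hi => mul_pos (div_pos (hv i hi) hγ) (hc i hi)) hs
  have hnum : ∑ i ∈ s, (v i - cpa i) * c i = ∑ i ∈ s, (v i - v i / (1 + γ)) * c i :=
    Finset.sum_congr rfl fun i hi => by rw [hcpa i hi]
  have hden_eq : ∑ i ∈ s, cpa i * c i = ∑ i ∈ s, v i / (1 + γ) * c i :=
    Finset.sum_congr rfl fun i hi => by rw [hcpa i hi]
  rw [hnum, hden_eq, sum_sub_div_one_add_mul_eq s v c hγ.ne', mul_div_cancel_right₀ γ hden_pos.ne']

theorem feasible_reports_and_truthful_optimal_general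
    {H : Type*} [Fintype H] [Nonempty H]
    (I : ℝ) (hI : I = 0 ∨ I = 1)
    (Γ : Set ℝ) (hΓ : Γ = Set.Ioi (-1 + I))
    (v : H → ℝ) (hv : ∀ h, 0 < v h)
    (cpa cv : H → ℝ → ℝ)
    (hcpa : ∀ h, ∀ γ ∈ Γ, cpa h γ = v h / (1 + γ))
    (hcv : ∀ h, ∀ γ ∈ Γ, 0 < cv h γ)
    (W : ℝ → ℝ)
    (hWmono : AntitoneOn W Γ) :
    ∀ γ₀ ∈ Γ,
      ({γ' | γ' ∈ Γ ∧
          γ₀ ≤ (∑ h, (v h - cpa h γ') * cv h γ') / (∑ h, cpa h γ' * cv h γ')} =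
        {γ' | γ' ∈ Γ ∧ γ₀ ≤ γ'}) ∧
      (∀ γ' ∈ Γ, γ₀ ≤ γ' → W γ' ≤ W γ₀) := by
  have hI₀ : 0 ≤ I := by rcases hI with rfl | rfl <;> norm_num
  have hroi : ∀ γ ∈ Γ,
      (∑ h, (v h - cpa h γ) * cv h γ) / (∑ h, cpa h γ * cv h γ) = γ := by
    intro γ hγ
    have hγ_pos : 0 < 1 + γ := by
      rw [hΓ, Set.mem_Ioi] at hγ
      linarith
    exact aggregate_roi_eq_of_cpa_eq_div Finset.univ Finset.univ_nonempty v (cpa · γ) (cv · γ)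
      (fun h _ => hv h) (fun h _ => hcv h γ hγ) hγ_pos (fun h _ => hcpa h γ hγ)
  intro γ₀ hγ₀
  refine ⟨?_, fun γ' hγ' hle => hWmono hγ₀ hγ' hle⟩
  ext γ'
  exact and_congr_right fun hγ' => by rw [hroi γ' hγ']

/-- If cpa_h(γ) = v^h/(1+γ) in every sub-market (so aggregate delivered ROI under report γ'
equals γ'), then for any true type γ₀ the feasible reports are exactly {γ' : γ' ≥ γ₀}, and
with a non-increasing truthful-utility function W, reporting γ₀ is weakly optimal among
feasible reports. -/
theorem feasible_reports_and_truthful_optimal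
    {H : Type*} [Fintype H] [Nonempty H]
    (I : ℝ) (hI : I = 0 ∨ I = 1)
    (Γ : Set ℝ) (hΓ : Γ = Set.Ioi (-1 + I))
    (v : H → ℝ) (hv : ∀ h, 0 < v h)
    (cpa cv : H → ℝ → ℝ)
    (hcpa : ∀ h, ∀ γ ∈ Γ, cpa h γ = v h / (1 + γ))
    (hcv : ∀ h, ∀ γ ∈ Γ, 0 < cv h γ)
    (W : ℝ → ℝ)
    (hW : ∀ γ ∈ Γ, W γ = ((1 + γ - I) / (1 + γ)) * ∑ h, v h * cv h γ)
    (hWmono : AntitoneOn W Γ) :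
    ∀ γ₀ ∈ Γ,
      ({γ' | γ' ∈ Γ ∧
          γ₀ ≤ (∑ h, (v h - cpa h γ') * cv h γ') / (∑ h, cpa h γ' * cv h γ')} =
        {γ' | γ' ∈ Γ ∧ γ₀ ≤ γ'}) ∧
      (∀ γ' ∈ Γ, γ₀ ≤ γ' → W γ' ≤ W γ₀) :=
  feasible_reports_and_truthful_optimal_general I hI Γ hΓ v hv cpa cv hcpa hcv W hWmono
end

section
/- Given a cumulative conversion function cv(γ) > 0, a linear decomposition with weights k_h ≥ 0 summing to 1, and sub-market CPA functions cpa_h(γ) satisfying Σ_h v^h·k_h = (1+γ)·Σ_h cpa_h(γ)·k_h for all γ, if γ ↦ ((1+γ−I)/(1+γ))·cv(γ) is non-increasing then the delivery mechanism {(cpa_h, k_h·cv)} is IC and IR: the realized aggregate ROI under report γ equals γ and the total utility equals ((1+γ−I)/(1+γ))·cv(γ)·Σ_h v^h·k_h, which is non-increasing in γ. -/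
/-! Every aggregate in the mechanism factors as a weighted sum times `cv γ`. Writing
`V = ∑ v h * k h` and `C γ = ∑ cpa h γ * k h`, the identity `V = (1 + γ) C γ` makes the delivered
ROI `(V - C γ) / C γ = γ` and the utility `(V - I C γ) cv γ = ((1 + γ - I) / (1 + γ)) cv γ V`;
the latter is the non-increasing map `γ ↦ ((1 + γ - I) / (1 + γ)) cv γ` scaled by `V ≥ 0`. -/

open Finset

section WeightedSums

variable {ι R : Type*} [CommRing R] (s : Finset ι) (f g w : ι → R) (a c : R)

lemma sum_mul_mul_const : ∑ i ∈ s, f i * (w i * c) = (∑ i ∈ s, f i * w i) * c := by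
  simp only [← mul_assoc, sum_mul]

lemma sum_sub_mul_mul_const :
    ∑ i ∈ s, (f i - g i) * (w i * c) = (∑ i ∈ s, f i * w i - ∑ i ∈ s, g i * w i) * c := by
  simp only [sub_mul, sum_sub_distrib, sum_mul_mul_const]

lemma sum_sub_const_mul_mul_mul_const :
    ∑ i ∈ s, (f i - a * g i) * (w i * c) =
      (∑ i ∈ s, f i * w i - a * ∑ i ∈ s, g i * w i) * c := by
  simp only [sub_mul, sum_sub_distrib, sum_mul_mul_const, mul_assoc, ← mul_sum]

end WeightedSums

section AggregateROI

variable {V C γ c : ℝ}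

lemma sub_mul_div_mul_eq_of_eq_one_add_mul (hV : V = (1 + γ) * C) (hC : C ≠ 0) (hc : c ≠ 0) :
    (V - C) * c / (C * c) = γ := by
  rw [hV]
  field_simp
  ring

lemma sub_mul_mul_eq_of_eq_one_add_mul (I : ℝ) (hV : V = (1 + γ) * C) (hγ : 1 + γ ≠ 0) :
    (V - I * C) * c = (1 + γ - I) / (1 + γ) * c * V := by
  rw [hV]
  field_simp

end AggregateROI

theorem linear_decomposition_ic_ir_general
    {H : Type*} [Fintype H]
    (I : ℝ) (hI : I = 0 ∨ I = 1)
    (Γ : Set ℝ) (hΓ : Γ = Set.Ioi (-1 + I))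
    (v : H → ℝ)
    (k : H → ℝ)
    (cpa : H → ℝ → ℝ) (cv : ℝ → ℝ)
    (hcv : ∀ γ ∈ Γ, 0 < cv γ)
    (hvk : 0 < ∑ h, v h * k h)
    (hcpak : ∀ γ ∈ Γ, 0 < ∑ h, cpa h γ * k h)
    (hid : ∀ γ ∈ Γ, ∑ h, v h * k h = (1 + γ) * ∑ h, cpa h γ * k h)
    (hmono : AntitoneOn (fun γ => ((1 + γ - I) / (1 + γ)) * cv γ) Γ) :
    (∀ γ ∈ Γ,
      (∑ h, (v h - cpa h γ) * (k h * cv γ)) / (∑ h, cpa h γ * (k h * cv γ)) = γ ∧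
      (∑ h, (v h - I * cpa h γ) * (k h * cv γ)) =
        ((1 + γ - I) / (1 + γ)) * cv γ * ∑ h, v h * k h) ∧
    AntitoneOn (fun γ => ∑ h, (v h - I * cpa h γ) * (k h * cv γ)) Γ := by
  have one_add_pos : ∀ γ ∈ Γ, 0 < 1 + γ := by
    intro γ hγ
    rw [hΓ, Set.mem_Ioi] at hγ
    rcases hI with rfl | rfl <;> linarith
  have utility : ∀ γ ∈ Γ, ∑ h, (v h - I * cpa h γ) * (k h * cv γ) =
      (1 + γ - I) / (1 + γ) * cv γ * ∑ h, v h * k h := fun γ hγ => by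
    rw [sum_sub_const_mul_mul_mul_const]
    exact sub_mul_mul_eq_of_eq_one_add_mul I (hid γ hγ) (one_add_pos γ hγ).ne'
  refine ⟨fun γ hγ => ⟨?_, utility γ hγ⟩, ?_⟩
  · rw [sum_sub_mul_mul_const, sum_mul_mul_const]
    exact sub_mul_div_mul_eq_of_eq_one_add_mul (hid γ hγ) (hcpak γ hγ).ne' (hcv γ hγ).ne'
  · refine AntitoneOn.congr (fun a ha b hb hab => ?_) fun γ hγ => (utility γ hγ).symm
    exact mul_le_mul_of_nonneg_right (hmono ha hb hab) hvk.le

/-- Linear decomposition mechanism: given weights k_h ≥ 0 summing to 1 with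
Σ v^h·k_h = (1+γ)·Σ cpa_h(γ)·k_h for every report γ, and ((1+γ−I)/(1+γ))·cv(γ)
non-increasing, the delivery mechanism {(cpa_h, k_h·cv)} delivers aggregate ROI exactly γ
and total utility ((1+γ−I)/(1+γ))·cv(γ)·Σ v^h·k_h, non-increasing in γ. -/
theorem linear_decomposition_ic_ir
    {H : Type*} [Fintype H] [Nonempty H]
    (I : ℝ) (hI : I = 0 ∨ I = 1)
    (Γ : Set ℝ) (hΓ : Γ = Set.Ioi (-1 + I))
    (v : H → ℝ) (hv : ∀ h, 0 < v h)
    (k : H → ℝ) (hk : ∀ h, 0 ≤ k h) (hksum : ∑ h, k h = 1)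
    (cpa : H → ℝ → ℝ) (cv : ℝ → ℝ)
    (hcv : ∀ γ ∈ Γ, 0 < cv γ)
    (hvk : 0 < ∑ h, v h * k h)
    (hcpak : ∀ γ ∈ Γ, 0 < ∑ h, cpa h γ * k h)
    (hid : ∀ γ ∈ Γ, ∑ h, v h * k h = (1 + γ) * ∑ h, cpa h γ * k h)
    (hmono : AntitoneOn (fun γ => ((1 + γ - I) / (1 + γ)) * cv γ) Γ) :
    (∀ γ ∈ Γ,
      (∑ h, (v h - cpa h γ) * (k h * cv γ)) / (∑ h, cpa h γ * (k h * cv γ)) = γ ∧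
      (∑ h, (v h - I * cpa h γ) * (k h * cv γ)) =
        ((1 + γ - I) / (1 + γ)) * cv γ * ∑ h, v h * k h) ∧
    AntitoneOn (fun γ => ∑ h, (v h - I * cpa h γ) * (k h * cv γ)) Γ :=
  linear_decomposition_ic_ir_general I hI Γ hΓ v k cpa cv hcv hvk hcpak hid hmono
end
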